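/- There exists a constant C > 0 such that for every 2m×2m real symmetric positive-semidefinite matrix E whose first row and first column are zero, all integers k ≥ l ≥ 1, and each i ∈ {2l−1, 2l}, one has trace((P^T Π_{2k,i} P) · E · (P^T Π_{2k,i} P)^T) ≤ C · λ_{k,l}(ρ)² · trace(E). -/

import Mathlib

open Matrix

noncomputable section

attribute [local instance] Classical.propDecidable

namespace Dipole

/-- the matrix `A = α I_m + ((1−α)/m) J` -/
def Amat (m : ℕ) (α : ℝ) : Matrix (Fin m) (Fin m) ℝ :=
  α • (1 : Matrix (Fin m) (Fin m) ℝ) + ((1 - α) / m) • Matrix.of fun _ _ => (1 : ℝ)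

/-- the matrix `B = β I_m + ((1−β)/m) J` -/
def Bmat (m : ℕ) (β : ℝ) : Matrix (Fin m) (Fin m) ℝ :=
  β • (1 : Matrix (Fin m) (Fin m) ℝ) + ((1 - β) / m) • Matrix.of fun _ _ => (1 : ℝ)

/-- the block matrix `H_odd = [[A, B], [0, 0]]` -/
def Hodd (m : ℕ) (α β : ℝ) : Matrix (Fin m ⊕ Fin m) (Fin m ⊕ Fin m) ℝ :=
  fromBlocks (Amat m α) (Bmat m β) 0 0

/-- the block matrix `H_even = [[0, 0], [B, A]]` -/
def Heven (m : ℕ) (α β : ℝ) : Matrix (Fin m ⊕ Fin m) (Fin m ⊕ Fin m) ℝ :=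
  fromBlocks 0 0 (Bmat m β) (Amat m α)

/-- the orthogonal matrix `Q = (u, w_1, …, w_{m−1})` with `u = (1/√m)(1,…,1)ᵀ` and
`w_r = (1/√(r(r+1)))(1,…,1,−r,0,…,0)ᵀ` (`r` leading ones) -/
def Qmat (m : ℕ) : Matrix (Fin m) (Fin m) ℝ :=
  Matrix.of fun i j =>
    if (j : ℕ) = 0 then (Real.sqrt m)⁻¹
    else if (i : ℕ) < (j : ℕ) then (Real.sqrt ((j : ℕ) * ((j : ℕ) + 1 : ℕ)))⁻¹
    else if (i : ℕ) = (j : ℕ) then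
      -(((j : ℕ) : ℝ)) * (Real.sqrt ((j : ℕ) * ((j : ℕ) + 1 : ℕ)))⁻¹
    else 0

/-- the orthogonal matrix `P = (1/√2) [[Q, Q], [Q, −Q]]` -/
def Pmat (m : ℕ) : Matrix (Fin m ⊕ Fin m) (Fin m ⊕ Fin m) ℝ :=
  (Real.sqrt 2)⁻¹ • fromBlocks (Qmat m) (Qmat m) (Qmat m) (-(Qmat m))

/-- `H_n = H_odd` for odd `n`, `H_even` for even `n` -/
def Hn (m : ℕ) (α β : ℝ) (n : ℕ) : Matrix (Fin m ⊕ Fin m) (Fin m ⊕ Fin m) ℝ :=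
  if Odd n then Hodd m α β else Heven m α β

/-- `Π_{k,l} = (I + H_{k+1}/k) ⋯ (I + H_{l+1}/l)` for `k ≥ l`, and `Π_{k,l} = I` for `k < l` -/
def Pimat (m : ℕ) (α β : ℝ) (l : ℕ) : ℕ → Matrix (Fin m ⊕ Fin m) (Fin m ⊕ Fin m) ℝ
  | 0 => 1
  | k + 1 =>
      if k + 1 < l then 1
      else ((1 : Matrix (Fin m ⊕ Fin m) (Fin m ⊕ Fin m) ℝ) +
        ((k : ℝ) + 1)⁻¹ • Hn m α β (k + 2)) * Pimat m α β l k

/-- `λ_{k,l}(c) = ∏_{i=l}^{k} (2i−1+2c)/(2i−1)` -/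
def lam (l k : ℕ) (c : ℝ) : ℝ :=
  ∏ i ∈ Finset.Icc l k, (2 * (i : ℝ) - 1 + 2 * c) / (2 * (i : ℝ) - 1)

/-- `ρ = max{0, γ, δ}` with `γ = (α+β)/2`, `δ = (α−β)/2` -/
def rho (α β : ℝ) : ℝ := max 0 (max ((α + β) / 2) ((α - β) / 2))

/-- the `ℓ²`-operator norm of a square real matrix -/
def opNorm {ι : Type*} [Fintype ι] [DecidableEq ι] (M : Matrix ι ι ℝ) : ℝ :=
  ‖Matrix.toEuclideanCLM (𝕜 := ℝ) M‖

/-- the submatrix obtained by deleting the first row and the first column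
(rows and columns `2` through `2m`) -/
def lowerSub (m : ℕ) [NeZero m] (M : Matrix (Fin m ⊕ Fin m) (Fin m ⊕ Fin m) ℝ) :
    Matrix {i : Fin m ⊕ Fin m // i ≠ Sum.inl 0} {i : Fin m ⊕ Fin m // i ≠ Sum.inl 0} ℝ :=
  M.submatrix Subtype.val Subtype.val

end Dipole

/-!
Conjugation by the orthogonal matrix `P` turns `H_odd` and `H_even` into block matrices
`K_odd`, `K_even` with diagonal blocks, and `Pᵀ Π_{2k,i} P` into a product of pair factors
`(1 + K_odd/(2j+2)) (1 + K_even/(2j+1))`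
`  = 1 + (K_odd + K_even)/(2j+1) + (K_odd K_even - K_odd)/((2j+1)(2j+2))`.
Since `E` vanishes on the first coordinate, the projection `Z` killing that coordinate may be
inserted on both sides of `E`. Every factor maps the range of `Z` into itself, and there
`1 + (K_odd + K_even)/(2j+1)` is diagonal with entries of modulus at most `1 + 2ρ/(2j+1)`.
The product of these bounds is at most `λ_{k,l}(ρ)`; the quadratic remainders are summable and
contribute the bounded factor `exp ‖K_odd K_even - K_odd‖`. Finally
`trace (M E Mᵀ) ≤ ‖M‖² trace E` for positive semidefinite `E`.
-/

open scoped Matrix.Norms.L2Operator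

namespace Matrix

variable {n : Type*} [Fintype n] [DecidableEq n]

theorem mulVec_dotProduct_mulVec_self_le (M : Matrix n n ℝ) (v : n → ℝ) :
    (M *ᵥ v) ⬝ᵥ (M *ᵥ v) ≤ ‖M‖ ^ 2 * (v ⬝ᵥ v) := by
  have hsq (w : n → ℝ) : w ⬝ᵥ w = ‖WithLp.toLp 2 w‖ ^ 2 := by
    rw [EuclideanSpace.real_norm_sq_eq]
    simp [dotProduct, sq]
  rw [hsq, hsq, ← mul_pow]
  exact pow_le_pow_left₀ (norm_nonneg _) (l2_opNorm_mulVec M (WithLp.toLp 2 v)) 2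

theorem trace_mul_mul_transpose_le (M : Matrix n n ℝ) {E : Matrix n n ℝ} (hE : E.PosSemidef) :
    trace (M * E * Mᵀ) ≤ ‖M‖ ^ 2 * trace E := by
  obtain ⟨r, v, rfl⟩ := posSemidef_iff_eq_sum_vecMulVec.mp hE
  simp only [star_trivial, Finset.mul_sum, Finset.sum_mul, trace_sum, mul_vecMulVec,
    vecMulVec_mul, vecMul_transpose, trace_vecMulVec]
  gcongr with i
  exact mulVec_dotProduct_mulVec_self_le M (v i)

end Matrix

/-- For an idempotent `e`, the elements mapping the range of `e` into itself. -/
def IsIdempotentElem.invtSubalgebra (R : Type*) {A : Type*} [CommSemiring R] [Semiring A]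
    [Algebra R A] {e : A} (he : IsIdempotentElem e) : Subalgebra R A where
  carrier := {x | x * e = e * x * e}
  mul_mem' {x y} hx hy := by
    calc x * y * e = x * e * y * e := by rw [mul_assoc x, hy]; simp only [mul_assoc]
      _ = e * x * (e * y * e) := by rw [hx]; simp only [mul_assoc]
      _ = e * (x * y) * e := by rw [← hy]; simp only [mul_assoc]
  add_mem' hx hy := by
    simp only [Set.mem_ofPred_eq, add_mul, mul_add] at *
    rw [hx, hy]
  algebraMap_mem' r := by
    change _ * e = e * _ * e
    rw [mul_assoc, Algebra.commutes r e, ← mul_assoc, he.eq]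

theorem one_add_smul_mul_one_add_smul {R A : Type*} [CommRing R] [Ring A] [Algebra R A]
    {s t : R} (h : t + s * t = s) (x y : A) :
    (1 + t • x) * (1 + s • y) = 1 + s • (x + y) + (s * t) • (x * y - x) := by
  simp only [mul_add, add_mul, one_mul, mul_one, smul_mul_smul_comm]
  linear_combination (norm := module) h • x

theorem norm_one_add_smul_le {𝕜 A : Type*} [NormedField 𝕜] [SeminormedRing A] [NormOneClass A]
    [NormedSpace 𝕜 A] {c : 𝕜} (hc : ‖c‖ ≤ 1) (x : A) : ‖1 + c • x‖ ≤ 1 + ‖x‖ := by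
  grw [norm_add_le, norm_one, norm_smul_le, hc, one_mul]

theorem Fin.sum_ite_val_lt_ite_val_eq {m : ℕ} (j : Fin m) (c d : ℝ) :
    ∑ i : Fin m, (if (i : ℕ) < j then c else if (i : ℕ) = j then d else 0) = j * c + d := by
  rw [Fin.sum_univ_eq_sum_range (fun i => if i < (j : ℕ) then c else if i = j then d else 0),
    ← Finset.sum_range_add_sum_Ico _ j.isLt, Finset.sum_range_succ,
    Finset.sum_eq_zero (s := Finset.Ico _ m) fun i hi => ?_,
    Finset.sum_congr rfl fun i hi => if_pos (Finset.mem_range.mp hi)]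
  · simp
  · have := (Finset.mem_Ico.mp hi).1
    rw [if_neg (by omega), if_neg (by omega)]

namespace Dipole

section orthogonal

variable {m : ℕ}

lemma Qmat_apply_of_val_eq_zero (i : Fin m) {j : Fin m} (hj : (j : ℕ) = 0) :
    Qmat m i j = (√m)⁻¹ := by
  simp [Qmat, hj]

lemma Qmat_apply_of_val_ne_zero (i : Fin m) {j : Fin m} (hj : (j : ℕ) ≠ 0) :
    Qmat m i j = (√((j : ℕ) * ((j : ℕ) + 1 : ℕ)))⁻¹ *
      (if (i : ℕ) < j then 1 else if (i : ℕ) = j then -(j : ℝ) else 0) := by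
  simp only [Qmat, of_apply, if_neg hj]
  split_ifs <;> ring

lemma sum_Qmat_col {j : Fin m} (hj : (j : ℕ) ≠ 0) : ∑ i, Qmat m i j = 0 := by
  simp_rw [Qmat_apply_of_val_ne_zero _ hj, ← Finset.mul_sum, Fin.sum_ite_val_lt_ite_val_eq]
  ring

lemma sum_Qmat_mul_self (j : Fin m) : ∑ i, Qmat m i j * Qmat m i j = 1 := by
  by_cases hj : (j : ℕ) = 0
  · have : (0 : ℝ) < m := by have := j.pos; positivity
    simp [Qmat_apply_of_val_eq_zero _ hj, ← mul_inv, this.le, this.ne']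
  · have hpos : (0 : ℝ) < (j : ℕ) := by positivity
    have hsq : (√((j : ℕ) * ((j : ℕ) + 1 : ℕ)))⁻¹ * (√((j : ℕ) * ((j : ℕ) + 1 : ℕ)))⁻¹ =
        ((j : ℝ) * (j + 1))⁻¹ := by
      rw [← mul_inv, Real.mul_self_sqrt (by positivity)]
      push_cast
      ring
    have hterm (i : Fin m) : Qmat m i j * Qmat m i j = ((j : ℝ) * (j + 1))⁻¹ *
        (if (i : ℕ) < j then 1 else if (i : ℕ) = j then (j : ℝ) ^ 2 else 0) := by
      rw [Qmat_apply_of_val_ne_zero _ hj, ← hsq]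
      split_ifs <;> ring
    simp_rw [hterm, ← Finset.mul_sum, Fin.sum_ite_val_lt_ite_val_eq]
    field_simp
    ring

/-- On the support of column `a`, column `b` is constant, so only the sum of column `a` matters. -/
lemma sum_Qmat_mul_Qmat_of_lt {a b : Fin m} (hab : (a : ℕ) < b) :
    ∑ i, Qmat m i a * Qmat m i b = 0 := by
  have hb : (b : ℕ) ≠ 0 := by omega
  by_cases ha : (a : ℕ) = 0
  · simp_rw [Qmat_apply_of_val_eq_zero _ ha, ← Finset.mul_sum, sum_Qmat_col hb, mul_zero]
  · have hterm (i : Fin m) : Qmat m i a * Qmat m i b =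
        (√((b : ℕ) * ((b : ℕ) + 1 : ℕ)))⁻¹ * Qmat m i a := by
      rcases lt_or_ge (a : ℕ) i with hai | hia
      · simp [Qmat_apply_of_val_ne_zero i ha, hai.not_gt, hai.ne']
      · rw [Qmat_apply_of_val_ne_zero i hb, if_pos (by omega)]
        ring
    simp_rw [hterm, ← Finset.mul_sum, sum_Qmat_col ha, mul_zero]

lemma Qmat_transpose_mul_self : (Qmat m)ᵀ * Qmat m = 1 := by
  ext a b
  simp only [mul_apply, transpose_apply]
  rcases lt_trichotomy (a : ℕ) b with hab | hab | hab
  · rw [sum_Qmat_mul_Qmat_of_lt hab, one_apply_ne (by omega)]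
  · rw [Fin.ext hab, sum_Qmat_mul_self, one_apply_eq]
  · simp_rw [mul_comm (Qmat m _ a)]
    rw [sum_Qmat_mul_Qmat_of_lt hab, one_apply_ne (by omega)]

lemma Pmat_transpose_mul_fromBlocks_mul_Pmat (X₁₁ X₁₂ X₂₁ X₂₂ : Matrix (Fin m) (Fin m) ℝ) :
    (Pmat m)ᵀ * fromBlocks X₁₁ X₁₂ X₂₁ X₂₂ * Pmat m = (2 : ℝ)⁻¹ • fromBlocks
      ((Qmat m)ᵀ * (X₁₁ + X₁₂ + X₂₁ + X₂₂) * Qmat m) ((Qmat m)ᵀ * (X₁₁ - X₁₂ + X₂₁ - X₂₂) * Qmat m)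
      ((Qmat m)ᵀ * (X₁₁ + X₁₂ - X₂₁ - X₂₂) * Qmat m)
      ((Qmat m)ᵀ * (X₁₁ - X₁₂ - X₂₁ + X₂₂) * Qmat m) := by
  have h2 : (√2)⁻¹ * (√2)⁻¹ = (2 : ℝ)⁻¹ := by rw [← mul_inv, Real.mul_self_sqrt zero_le_two]
  simp only [Pmat, transpose_smul, fromBlocks_transpose, Matrix.smul_mul, Matrix.mul_smul,
    smul_smul, h2, fromBlocks_multiply, transpose_neg]
  congr 2 <;> noncomm_ring

lemma Pmat_transpose_mul_self : (Pmat m)ᵀ * Pmat m = 1 := by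
  have h := Pmat_transpose_mul_fromBlocks_mul_Pmat (m := m) 1 0 0 1
  rw [fromBlocks_one, Matrix.mul_one] at h
  rw [h]
  simp only [add_zero, sub_zero, sub_self, Matrix.mul_add, Matrix.add_mul, Matrix.mul_one,
    Matrix.mul_zero, Matrix.zero_mul, Qmat_transpose_mul_self]
  ext (i | i) (j | j) <;> simp [one_apply] <;> split_ifs <;> norm_num

lemma Pmat_mul_transpose_self : Pmat m * (Pmat m)ᵀ = 1 :=
  mul_eq_one_comm.mp Pmat_transpose_mul_self

lemma Pmat_conj_mul (X Y : Matrix (Fin m ⊕ Fin m) (Fin m ⊕ Fin m) ℝ) :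
    (Pmat m)ᵀ * (X * Y) * Pmat m = ((Pmat m)ᵀ * X * Pmat m) * ((Pmat m)ᵀ * Y * Pmat m) := by
  simp only [Matrix.mul_assoc]
  rw [← Matrix.mul_assoc (Pmat m), Pmat_mul_transpose_self, Matrix.one_mul]

end orthogonal

section recursion

variable {m : ℕ} {α β : ℝ}

def Kodd (m : ℕ) (α β : ℝ) : Matrix (Fin m ⊕ Fin m) (Fin m ⊕ Fin m) ℝ :=
  (Pmat m)ᵀ * Hodd m α β * Pmat m

def Keven (m : ℕ) (α β : ℝ) : Matrix (Fin m ⊕ Fin m) (Fin m ⊕ Fin m) ℝ :=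
  (Pmat m)ᵀ * Heven m α β * Pmat m

def Gmat (m : ℕ) (α β : ℝ) (i n : ℕ) : Matrix (Fin m ⊕ Fin m) (Fin m ⊕ Fin m) ℝ :=
  (Pmat m)ᵀ * Pimat m α β i n * Pmat m

lemma Pmat_conj_Hn_of_odd {n : ℕ} (h : Odd n) :
    (Pmat m)ᵀ * Hn m α β n * Pmat m = Kodd m α β := by
  rw [Hn, if_pos h, Kodd]

lemma Pmat_conj_Hn_of_even {n : ℕ} (h : Even n) :
    (Pmat m)ᵀ * Hn m α β n * Pmat m = Keven m α β := by
  rw [Hn, if_neg (Nat.not_odd_iff_even.mpr h), Keven]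

lemma Pimat_of_lt {i n : ℕ} (h : n < i) : Pimat m α β i n = 1 := by
  cases n with
  | zero => rfl
  | succ n => exact if_pos h

lemma Pimat_succ_of_le {i n : ℕ} (h : i ≤ n + 1) :
    Pimat m α β i (n + 1) = (1 + ((n : ℝ) + 1)⁻¹ • Hn m α β (n + 2)) * Pimat m α β i n :=
  if_neg h.not_gt

lemma Gmat_zero (i : ℕ) : Gmat m α β i 0 = 1 := by
  rw [Gmat, Pimat, Matrix.mul_one, Pmat_transpose_mul_self]

lemma Gmat_of_lt {i n : ℕ} (h : n < i) : Gmat m α β i n = 1 := by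
  rw [Gmat, Pimat_of_lt h, Matrix.mul_one, Pmat_transpose_mul_self]

lemma Gmat_succ_of_le {i n : ℕ} (h : i ≤ n + 1) :
    Gmat m α β i (n + 1) =
      (1 + ((n : ℝ) + 1)⁻¹ • ((Pmat m)ᵀ * Hn m α β (n + 2) * Pmat m)) * Gmat m α β i n := by
  rw [Gmat, Gmat, Pimat_succ_of_le h, Pmat_conj_mul, Matrix.mul_add, Matrix.add_mul,
    Matrix.mul_one, Pmat_transpose_mul_self, Matrix.mul_smul, Matrix.smul_mul]

lemma Gmat_two_mul_succ {i k : ℕ} (h : i ≤ 2 * k + 1) :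
    Gmat m α β i (2 * (k + 1)) = ((1 + (2 * (k : ℝ) + 2)⁻¹ • Kodd m α β) *
      (1 + (2 * (k : ℝ) + 1)⁻¹ • Keven m α β)) * Gmat m α β i (2 * k) := by
  rw [show 2 * (k + 1) = 2 * k + 1 + 1 by ring, Gmat_succ_of_le (by omega),
    Gmat_succ_of_le (by omega), Pmat_conj_Hn_of_odd ⟨k + 1, by ring⟩,
    Pmat_conj_Hn_of_even ⟨k + 1, by ring⟩, Matrix.mul_assoc]
  push_cast
  ring_nf

end recursion

section blocks

variable {m : ℕ} [NeZero m] {α β : ℝ}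

def headDiag (m : ℕ) [NeZero m] (x y : ℝ) : Matrix (Fin m) (Fin m) ℝ :=
  diagonal fun r => if r = 0 then x else y

lemma ones_mul_Qmat : (of fun _ _ => (1 : ℝ)) * Qmat m = Qmat m * headDiag m m 0 := by
  ext i j
  rw [headDiag, mul_diagonal, mul_apply]
  by_cases hj : (j : ℕ) = 0
  · simp [Qmat_apply_of_val_eq_zero _ hj, Fin.ext_iff, hj, mul_comm]
  · simp [sum_Qmat_col hj, Fin.ext_iff, hj]

lemma Qmat_transpose_mul_Amat_mul_Qmat (α : ℝ) :
    (Qmat m)ᵀ * Amat m α * Qmat m = headDiag m 1 α := by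
  have hm : (m : ℝ) ≠ 0 := NeZero.ne _
  rw [Amat, Matrix.mul_add, Matrix.add_mul, Matrix.mul_smul, Matrix.smul_mul, Matrix.mul_smul,
    Matrix.smul_mul, Matrix.mul_assoc _ (of _), ones_mul_Qmat, ← Matrix.mul_assoc,
    Matrix.mul_one, Qmat_transpose_mul_self, Matrix.one_mul]
  ext i j
  by_cases hij : i = j
  · subst hij
    by_cases hi : i = 0 <;> simp [headDiag, hi, field]
  · simp [headDiag, hij]

lemma Qmat_transpose_mul_Bmat_mul_Qmat (β : ℝ) :
    (Qmat m)ᵀ * Bmat m β * Qmat m = headDiag m 1 β :=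
  Qmat_transpose_mul_Amat_mul_Qmat β

lemma Kodd_eq : Kodd m α β =
    fromBlocks (headDiag m 1 ((α + β) / 2)) (headDiag m 0 ((α - β) / 2))
      (headDiag m 1 ((α + β) / 2)) (headDiag m 0 ((α - β) / 2)) := by
  rw [Kodd, Hodd, Pmat_transpose_mul_fromBlocks_mul_Pmat]
  simp only [add_zero, sub_zero, Matrix.mul_add, Matrix.add_mul, Matrix.mul_sub, Matrix.sub_mul,
    Qmat_transpose_mul_Amat_mul_Qmat, Qmat_transpose_mul_Bmat_mul_Qmat]
  ext (i | i) (j | j) <;> by_cases hij : i = j <;> simp [headDiag, hij] <;> split_ifs <;> ring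

lemma Keven_eq : Keven m α β =
    fromBlocks (headDiag m 1 ((α + β) / 2)) (-headDiag m 0 ((α - β) / 2))
      (-headDiag m 1 ((α + β) / 2)) (headDiag m 0 ((α - β) / 2)) := by
  rw [Keven, Heven, Pmat_transpose_mul_fromBlocks_mul_Pmat]
  simp only [zero_add, zero_sub, Matrix.mul_add, Matrix.add_mul, Matrix.mul_sub, Matrix.sub_mul,
    Matrix.mul_neg, Matrix.neg_mul, Qmat_transpose_mul_Amat_mul_Qmat,
    Qmat_transpose_mul_Bmat_mul_Qmat]
  ext (i | i) (j | j) <;> by_cases hij : i = j <;> simp [headDiag, hij] <;> split_ifs <;> ring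

lemma Kodd_first_row : ∀ j ≠ Sum.inl 0, Kodd m α β (Sum.inl 0) j = 0 := by
  rintro (j | j) hj <;> simp [Kodd_eq, headDiag, diagonal_apply]
  exact fun h => hj (congrArg _ h.symm)

lemma Keven_first_row : ∀ j ≠ Sum.inl 0, Keven m α β (Sum.inl 0) j = 0 := by
  rintro (j | j) hj <;> simp [Keven_eq, headDiag, diagonal_apply]
  exact fun h => hj (congrArg _ h.symm)

def dropFirst (m : ℕ) [NeZero m] : Matrix (Fin m ⊕ Fin m) (Fin m ⊕ Fin m) ℝ :=
  diagonal fun i => if i = Sum.inl 0 then 0 else 1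

lemma dropFirst_isIdempotentElem : IsIdempotentElem (dropFirst m) := by
  rw [IsIdempotentElem, dropFirst, diagonal_mul_diagonal]
  congr 1
  ext i
  split_ifs <;> norm_num

lemma dropFirst_transpose : (dropFirst m)ᵀ = dropFirst m := diagonal_transpose _

lemma norm_dropFirst_le : ‖dropFirst m‖ ≤ 1 := by
  rw [dropFirst, l2_opNorm_diagonal, pi_norm_le_iff_of_nonneg zero_le_one]
  intro i
  split_ifs <;> simp

lemma dropFirst_mul_mul_dropFirst {E : Matrix (Fin m ⊕ Fin m) (Fin m ⊕ Fin m) ℝ}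
    (hrow : ∀ j, E (Sum.inl 0) j = 0) (hcol : ∀ j, E j (Sum.inl 0) = 0) :
    dropFirst m * E * dropFirst m = E := by
  ext i j
  rw [dropFirst, mul_diagonal, diagonal_mul]
  by_cases hi : i = Sum.inl 0
  · simp [hi, hrow]
  · by_cases hj : j = Sum.inl 0 <;> simp [hi, hj, hcol]

lemma mul_dropFirst_eq_of_first_row {X : Matrix (Fin m ⊕ Fin m) (Fin m ⊕ Fin m) ℝ}
    (hX : ∀ j ≠ Sum.inl 0, X (Sum.inl 0) j = 0) :
    X * dropFirst m = dropFirst m * X * dropFirst m := by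
  ext i j
  rw [dropFirst, mul_diagonal, mul_diagonal, diagonal_mul]
  by_cases hi : i = Sum.inl 0
  · by_cases hj : j = Sum.inl 0
    · simp [hj]
    · simp [hi, hX j hj]
  · simp [hi]

lemma Gmat_mem_invtSubalgebra (i n : ℕ) :
    Gmat m α β i n ∈ (dropFirst_isIdempotentElem (m := m)).invtSubalgebra ℝ := by
  have hfactor (c : ℝ) (K) (hK : ∀ j ≠ Sum.inl 0, K (Sum.inl 0) j = 0) :
      1 + c • K ∈ (dropFirst_isIdempotentElem (m := m)).invtSubalgebra ℝ :=
    add_mem (one_mem _) (Subalgebra.smul_mem _ (mul_dropFirst_eq_of_first_row hK) c)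
  have hHn (n : ℕ) :
      ∀ j ≠ Sum.inl 0, ((Pmat m)ᵀ * Hn m α β n * Pmat m) (Sum.inl 0) j = 0 := by
    unfold Hn
    split_ifs
    exacts [Kodd_first_row, Keven_first_row]
  induction n with
  | zero => rw [Gmat_zero]; exact one_mem _
  | succ n ih =>
    rcases lt_or_ge (n + 1) i with h | h
    · rw [Gmat_of_lt h]; exact one_mem _
    · rw [Gmat_succ_of_le h]; exact mul_mem (hfactor _ _ (hHn _)) ih

lemma one_add_smul_Kodd_add_Keven_mul_dropFirst (s : ℝ) :
    (1 + s • (Kodd m α β + Keven m α β)) * dropFirst m = diagonal (Sum.elim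
      (fun r => if r = 0 then 0 else 1 + 2 * s * ((α + β) / 2))
      (fun r => if r = 0 then 1 else 1 + 2 * s * ((α - β) / 2))) := by
  rw [Kodd_eq, Keven_eq, dropFirst]
  ext (i | i) (j | j) <;> by_cases hij : i = j <;> simp [mul_diagonal, headDiag, hij] <;>
    split_ifs <;> ring

lemma norm_one_add_smul_Kodd_add_Keven_mul_dropFirst_le (hα : -1 ≤ α) (hβ : |β| ≤ 1) {s : ℝ}
    (hs₀ : 0 ≤ s) (hs₁ : s ≤ 1) :
    ‖(1 + s • (Kodd m α β + Keven m α β)) * dropFirst m‖ ≤ 1 + 2 * s * rho α β := by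
  have hρ : 0 ≤ rho α β := le_max_left _ _
  have hγ : (α + β) / 2 ≤ rho α β := (le_max_left _ _).trans (le_max_right _ _)
  have hδ : (α - β) / 2 ≤ rho α β := (le_max_right _ _).trans (le_max_right _ _)
  obtain ⟨hβ₀, hβ₁⟩ := abs_le.mp hβ
  rw [one_add_smul_Kodd_add_Keven_mul_dropFirst, l2_opNorm_diagonal,
    pi_norm_le_iff_of_nonneg (by positivity)]
  rintro (r | r) <;> simp only [Sum.elim_inl, Sum.elim_inr, Real.norm_eq_abs] <;> split_ifs <;>
    exact abs_le.mpr ⟨by nlinarith, by nlinarith⟩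

lemma norm_pair_mul_dropFirst_le (hα : -1 ≤ α) (hβ : |β| ≤ 1) (k : ℕ) :
    ‖(1 + (2 * (k : ℝ) + 2)⁻¹ • Kodd m α β) * (1 + (2 * (k : ℝ) + 1)⁻¹ • Keven m α β) *
        dropFirst m‖ ≤
      1 + 2 * (2 * (k : ℝ) + 1)⁻¹ * rho α β +
        (2 * (k : ℝ) + 1)⁻¹ * (2 * (k : ℝ) + 2)⁻¹ * ‖Kodd m α β * Keven m α β - Kodd m α β‖ := by
  have hst : (2 * (k : ℝ) + 2)⁻¹ + (2 * (k : ℝ) + 1)⁻¹ * (2 * (k : ℝ) + 2)⁻¹ =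
      (2 * (k : ℝ) + 1)⁻¹ := by
    field_simp
    ring
  have hs₁ : (2 * (k : ℝ) + 1)⁻¹ ≤ 1 :=
    inv_le_one_of_one_le₀ (by linarith [k.cast_nonneg (α := ℝ)])
  rw [one_add_smul_mul_one_add_smul hst, Matrix.add_mul, Matrix.smul_mul]
  grw [norm_add_le, norm_one_add_smul_Kodd_add_Keven_mul_dropFirst_le hα hβ (by positivity) hs₁,
    norm_smul, norm_mul_le (_ - _), norm_dropFirst_le, Real.norm_of_nonneg (by positivity),
    mul_one]

lemma norm_Gmat_two_mul_le {i l : ℕ} (hl : 1 ≤ l) (hi : i = 2 * l - 1 ∨ i = 2 * l) :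
    ‖Gmat m α β i (2 * l)‖ ≤ (1 + ‖Kodd m α β‖) * (1 + ‖Keven m α β‖) := by
  have hc (n : ℕ) : ‖((n : ℝ) + 1)⁻¹‖ ≤ 1 := by
    rw [norm_inv]
    exact inv_le_one_of_one_le₀ (by rw [Real.norm_eq_abs, abs_of_nonneg (by positivity)]; simp)
  have hprev : ‖Gmat m α β i (2 * l - 1)‖ ≤ 1 + ‖Keven m α β‖ := by
    rcases hi with rfl | rfl
    · rw [show 2 * l - 1 = 2 * l - 2 + 1 by omega, Gmat_succ_of_le le_rfl,
        Gmat_of_lt (by omega), Matrix.mul_one, Pmat_conj_Hn_of_even ⟨l, by omega⟩]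
      exact norm_one_add_smul_le (hc _) _
    · rw [Gmat_of_lt (by omega), norm_one]
      exact le_add_of_nonneg_right (norm_nonneg _)
  rw [show 2 * l = 2 * l - 1 + 1 by omega, Gmat_succ_of_le (by omega),
    Pmat_conj_Hn_of_odd ⟨l, by omega⟩]
  grw [norm_mul_le, norm_one_add_smul_le (hc _), hprev]

lemma norm_Gmat_mul_dropFirst_le (hα : -1 ≤ α) (hβ : |β| ≤ 1) {i l : ℕ} (hi : i ≤ 2 * l)
    {k : ℕ} (hk : l ≤ k) :
    ‖Gmat m α β i (2 * k) * dropFirst m‖ ≤ ‖Gmat m α β i (2 * l)‖ *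
      ∏ j ∈ Finset.Ico l k, (1 + 2 * (2 * (j : ℝ) + 1)⁻¹ * rho α β +
        (2 * (j : ℝ) + 1)⁻¹ * (2 * (j : ℝ) + 2)⁻¹ * ‖Kodd m α β * Keven m α β - Kodd m α β‖) := by
  induction k, hk using Nat.le_induction with
  | base =>
    grw [Finset.Ico_self, Finset.prod_empty, norm_mul_le, norm_dropFirst_le]
  | succ k hk ih =>
    set W := (1 + (2 * (k : ℝ) + 2)⁻¹ • Kodd m α β) * (1 + (2 * (k : ℝ) + 1)⁻¹ • Keven m α β)
    have hG : Gmat m α β i (2 * k) * dropFirst m =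
        dropFirst m * Gmat m α β i (2 * k) * dropFirst m :=
      Gmat_mem_invtSubalgebra i (2 * k)
    have hW := norm_pair_mul_dropFirst_le (m := m) hα hβ k
    calc ‖Gmat m α β i (2 * (k + 1)) * dropFirst m‖
        = ‖(W * dropFirst m) * (Gmat m α β i (2 * k) * dropFirst m)‖ := by
          congr 1
          conv_lhs => rw [Gmat_two_mul_succ (by omega), Matrix.mul_assoc, hG]
          simp only [W, Matrix.mul_assoc]
      _ ≤ ‖W * dropFirst m‖ * ‖Gmat m α β i (2 * k) * dropFirst m‖ := norm_mul_le _ _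
      _ ≤ _ := by
          rw [Finset.prod_Ico_succ_top hk]
          exact (mul_le_mul hW ih (norm_nonneg _) ((norm_nonneg _).trans hW)).trans_eq (by ring)

end blocks

section products

lemma one_le_lam_factor {ρ : ℝ} (hρ : 0 ≤ ρ) {i : ℕ} (hi : 1 ≤ i) :
    1 ≤ (2 * (i : ℝ) - 1 + 2 * ρ) / (2 * (i : ℝ) - 1) := by
  have : (1 : ℝ) ≤ i := by exact_mod_cast hi
  rw [le_div_iff₀ (by linarith)]
  linarith

lemma prod_one_add_le_lam {ρ : ℝ} (hρ : 0 ≤ ρ) {l : ℕ} (hl : 1 ≤ l) (k : ℕ) :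
    ∏ j ∈ Finset.Ico l k, (1 + 2 * (2 * (j : ℝ) + 1)⁻¹ * ρ) ≤ lam l k ρ := by
  have hshift (j : ℕ) : 1 + 2 * (2 * (j : ℝ) + 1)⁻¹ * ρ =
      (2 * ((j + 1 : ℕ) : ℝ) - 1 + 2 * ρ) / (2 * ((j + 1 : ℕ) : ℝ) - 1) := by
    rw [show 2 * ((j + 1 : ℕ) : ℝ) - 1 = 2 * j + 1 by push_cast; ring]
    field_simp
  simp_rw [hshift]
  rw [Finset.prod_Ico_add' (fun i : ℕ => (2 * (i : ℝ) - 1 + 2 * ρ) / (2 * (i : ℝ) - 1)), lam]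
  refine Finset.prod_le_prod_of_subset_of_one_le (fun i hi => ?_) (fun i hi => ?_)
    fun i hi _ => one_le_lam_factor hρ (hl.trans (Finset.mem_Icc.mp hi).1)
  · simp only [Finset.mem_Ico, Finset.mem_Icc] at hi ⊢
    omega
  · exact zero_le_one.trans (one_le_lam_factor hρ (by simp at hi; omega))

lemma sum_inv_mul_inv_le_one (l k : ℕ) :
    ∑ j ∈ Finset.Ico l k, (2 * (j : ℝ) + 1)⁻¹ * (2 * (j : ℝ) + 2)⁻¹ ≤ 1 := by
  have hterm (j : ℕ) : (2 * (j : ℝ) + 1)⁻¹ * (2 * (j : ℝ) + 2)⁻¹ ≤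
      ((j : ℝ) + 1)⁻¹ - ((j + 1 : ℕ) + 1 : ℝ)⁻¹ := by
    have htel : ((j : ℝ) + 1)⁻¹ - ((j + 1 : ℕ) + 1 : ℝ)⁻¹ = (((j : ℝ) + 1) * (j + 2))⁻¹ := by
      push_cast
      field_simp
      ring
    rw [htel, ← mul_inv]
    exact inv_anti₀ (by positivity) (by nlinarith)
  calc ∑ j ∈ Finset.Ico l k, (2 * (j : ℝ) + 1)⁻¹ * (2 * (j : ℝ) + 2)⁻¹
      ≤ ∑ j ∈ Finset.Ico l k, (((j : ℝ) + 1)⁻¹ - ((j + 1 : ℕ) + 1 : ℝ)⁻¹) :=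
        Finset.sum_le_sum fun j _ => hterm j
    _ ≤ ∑ j ∈ Finset.range k, (((j : ℝ) + 1)⁻¹ - ((j + 1 : ℕ) + 1 : ℝ)⁻¹) :=
        Finset.sum_le_sum_of_subset_of_nonneg
          (fun j hj => Finset.mem_range.mpr (Finset.mem_Ico.mp hj).2)
          fun j _ _ => (mul_nonneg (by positivity) (by positivity)).trans (hterm j)
    _ = 1 - ((k : ℝ) + 1)⁻¹ := by rw [Finset.sum_range_sub']; simp
    _ ≤ 1 := sub_le_self _ (by positivity)

lemma prod_le_lam_mul_exp {ρ c : ℝ} (hρ : 0 ≤ ρ) (hc : 0 ≤ c) {l : ℕ} (hl : 1 ≤ l) (k : ℕ) :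
    ∏ j ∈ Finset.Ico l k, (1 + 2 * (2 * (j : ℝ) + 1)⁻¹ * ρ +
      (2 * (j : ℝ) + 1)⁻¹ * (2 * (j : ℝ) + 2)⁻¹ * c) ≤ lam l k ρ * Real.exp c := by
  calc _ ≤ ∏ j ∈ Finset.Ico l k, ((1 + 2 * (2 * (j : ℝ) + 1)⁻¹ * ρ) *
        Real.exp ((2 * (j : ℝ) + 1)⁻¹ * (2 * (j : ℝ) + 2)⁻¹ * c)) := by
        refine Finset.prod_le_prod (fun j _ => by positivity) fun j _ => ?_
        have h₁ := Real.add_one_le_exp ((2 * (j : ℝ) + 1)⁻¹ * (2 * (j : ℝ) + 2)⁻¹ * c)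
        have h₂ : 0 ≤ (2 * (j : ℝ) + 1)⁻¹ * (2 * (j : ℝ) + 2)⁻¹ * c := by positivity
        have h₃ : 0 ≤ 2 * (2 * (j : ℝ) + 1)⁻¹ * ρ := by positivity
        nlinarith
    _ = (∏ j ∈ Finset.Ico l k, (1 + 2 * (2 * (j : ℝ) + 1)⁻¹ * ρ)) *
        Real.exp ((∑ j ∈ Finset.Ico l k, (2 * (j : ℝ) + 1)⁻¹ * (2 * (j : ℝ) + 2)⁻¹) * c) := by
        rw [Finset.prod_mul_distrib, Finset.sum_mul, Real.exp_sum]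
    _ ≤ lam l k ρ * Real.exp c := by
        have hlam := prod_one_add_le_lam hρ hl k
        gcongr
        · exact (Finset.prod_nonneg fun j _ => by positivity).trans hlam
        · exact mul_le_of_le_one_left hc (sum_inv_mul_inv_le_one l k)

end products

lemma norm_Gmat_mul_dropFirst_le_mul_lam {m : ℕ} [NeZero m] {α β : ℝ} (hα : -1 ≤ α)
    (hβ : |β| ≤ 1) {k l i : ℕ} (hl : 1 ≤ l) (hlk : l ≤ k) (hi : i = 2 * l - 1 ∨ i = 2 * l) :
    ‖Gmat m α β i (2 * k) * dropFirst m‖ ≤ (1 + ‖Kodd m α β‖) * (1 + ‖Keven m α β‖) *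
      Real.exp ‖Kodd m α β * Keven m α β - Kodd m α β‖ * lam l k (rho α β) := by
  have hρ : 0 ≤ rho α β := le_max_left _ _
  calc _ ≤ _ := norm_Gmat_mul_dropFirst_le hα hβ (by omega) hlk
    _ ≤ ((1 + ‖Kodd m α β‖) * (1 + ‖Keven m α β‖)) *
        (lam l k (rho α β) * Real.exp ‖Kodd m α β * Keven m α β - Kodd m α β‖) :=
      mul_le_mul (norm_Gmat_two_mul_le hl hi) (prod_le_lam_mul_exp hρ (norm_nonneg _) hl k)
        (Finset.prod_nonneg fun j _ => by positivity) (by positivity)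
    _ = _ := by ring

end Dipole

open Dipole in
/-- **Lemma 3.4' (trace inequality for the reduced products).**
There is a constant `C > 0` such that for every symmetric positive-semidefinite
`2m × 2m` matrix `E` with vanishing first row and column, all `k ≥ l ≥ 1` and
`i ∈ {2l−1, 2l}`, `trace((Pᵀ Π_{2k,i} P) E (Pᵀ Π_{2k,i} P)ᵀ) ≤ C λ_{k,l}(ρ)² trace(E)`. -/
theorem Dipole.Pimat_trace_bound
    (m : ℕ) (hm : 2 ≤ m) [NeZero m] (α β : ℝ)
    (hα : α ∈ Set.Icc (-(1 / ((m : ℝ) - 1))) 1)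
    (hβ : β ∈ Set.Icc (-(1 / ((m : ℝ) - 1))) 1) :
    ∃ C : ℝ, 0 < C ∧
      ∀ E : Matrix (Fin m ⊕ Fin m) (Fin m ⊕ Fin m) ℝ, E.IsSymm → E.PosSemidef →
        (∀ j, E (Sum.inl 0) j = 0) → (∀ j, E j (Sum.inl 0) = 0) →
        ∀ k l : ℕ, 1 ≤ l → l ≤ k → ∀ i : ℕ, i = 2 * l - 1 ∨ i = 2 * l →
          Matrix.trace
              (((Pmat m)ᵀ * Pimat m α β i (2 * k) * Pmat m) * E *
                ((Pmat m)ᵀ * Pimat m α β i (2 * k) * Pmat m)ᵀ) ≤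
            C * lam l k (rho α β) ^ 2 * Matrix.trace E := by
  have hm' : 1 / ((m : ℝ) - 1) ≤ 1 := by
    have : (2 : ℝ) ≤ m := by exact_mod_cast hm
    rw [div_le_one (by linarith)]
    linarith
  have hα₁ : -1 ≤ α := by linarith [hα.1]
  have hβ₁ : |β| ≤ 1 := abs_le.mpr ⟨by linarith [hβ.1], hβ.2⟩
  refine ⟨((1 + ‖Kodd m α β‖) * (1 + ‖Keven m α β‖) *
    Real.exp ‖Kodd m α β * Keven m α β - Kodd m α β‖) ^ 2, by positivity,
    fun E _ hE hrow hcol k l hl hlk i hi => ?_⟩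
  change trace (Gmat m α β i (2 * k) * E * (Gmat m α β i (2 * k))ᵀ) ≤ _
  calc _ = trace ((Gmat m α β i (2 * k) * dropFirst m) * E *
        (Gmat m α β i (2 * k) * dropFirst m)ᵀ) := by
        conv_lhs => rw [← dropFirst_mul_mul_dropFirst hrow hcol]
        simp only [transpose_mul, dropFirst_transpose, Matrix.mul_assoc]
    _ ≤ ‖Gmat m α β i (2 * k) * dropFirst m‖ ^ 2 * trace E := trace_mul_mul_transpose_le _ hE
    _ ≤ _ := by
        grw [norm_Gmat_mul_dropFirst_le_mul_lam hα₁ hβ₁ hl hlk hi]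
        · exact le_of_eq (by ring)
        · exact hE.trace_nonneg
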